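/- If (X,d) is a complete metric space, then (X,d_0) is complete, where d_0(p,q) = sup_{ε>0} d_ε(p,q) (restricting to the values where d_0 is finite, i.e., every d_0-Cauchy sequence d_0-converges to a point of X). -/

import Mathlib

open Filter Set
open scoped ENNReal

variable {X : Type*}

/-- The length of the chain `x 0, x 1, …, x n` with respect to the distance `ρ`. -/
noncomputable def chainLengthOf (ρ : X → X → ℝ≥0∞) (x : ℕ → X) (n : ℕ) : ℝ≥0∞ :=
  ∑ k ∈ Finset.range n, ρ (x k) (x (k + 1))

/-- `x 0, …, x n` is an `ε`-chain from `p` to `q` with respect to `ρ`. -/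
def IsChainOf (ρ : X → X → ℝ≥0∞) (ε : ℝ≥0∞) (p q : X) (x : ℕ → X) (n : ℕ) : Prop :=
  x 0 = p ∧ x n = q ∧ ∀ k < n, ρ (x k) (x (k + 1)) ≤ ε

/-- `d_ε`: the infimum of lengths of `ε`-chains joining `p` to `q`. -/
noncomputable def chainDistOf (ρ : X → X → ℝ≥0∞) (ε : ℝ≥0∞) (p q : X) : ℝ≥0∞ :=
  ⨅ (n : ℕ) (x : ℕ → X) (_ : IsChainOf ρ ε p q x n), chainLengthOf ρ x n

/-- `d_0 = sup_{ε > 0} d_ε`. -/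
noncomputable def chainMetricOf (ρ : X → X → ℝ≥0∞) (p q : X) : ℝ≥0∞ :=
  ⨆ (ε : ℝ≥0∞) (_ : 0 < ε), chainDistOf ρ ε p q

/-- `d_ε` for a metric space, with `ρ = edist`. -/
noncomputable def chainDist [PseudoEMetricSpace X] (ε : ℝ≥0∞) (p q : X) : ℝ≥0∞ :=
  chainDistOf (fun a b => edist a b) ε p q

/-- `d_0` for a metric space, with `ρ = edist`. -/
noncomputable def chainMetric [PseudoEMetricSpace X] (p q : X) : ℝ≥0∞ :=
  chainMetricOf (fun a b => edist a b) p q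

/-- The length of a path `γ : [0,1] → X` with respect to `ρ`:
the supremum over partitions `0 = t 0 ≤ t 1 ≤ … ≤ t n = 1` of the partition sums. -/
noncomputable def pathLengthOf (ρ : X → X → ℝ≥0∞) (γ : ℝ → X) : ℝ≥0∞ :=
  ⨆ (n : ℕ) (t : ℕ → ℝ) (_ : t 0 = 0 ∧ t n = 1 ∧ Monotone t),
    ∑ k ∈ Finset.range n, ρ (γ (t k)) (γ (t (k + 1)))

noncomputable def pathLength [PseudoEMetricSpace X] (γ : ℝ → X) : ℝ≥0∞ :=
  pathLengthOf (fun a b => edist a b) γ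

/-- Continuity of a path `γ` on `[0,1]` with respect to the distance `ρ`. -/
def ContinuousWrt (ρ : X → X → ℝ≥0∞) (γ : ℝ → X) : Prop :=
  ∀ t ∈ Icc (0 : ℝ) 1,
    Tendsto (fun s => ρ (γ s) (γ t)) (nhdsWithin t (Icc (0 : ℝ) 1)) (nhds 0)

/-- The induced length metric with respect to `ρ`: the infimum of `ρ`-lengths of
`ρ`-continuous paths joining `p` to `q`. -/
noncomputable def lengthMetricOf (ρ : X → X → ℝ≥0∞) (p q : X) : ℝ≥0∞ :=
  ⨅ (γ : ℝ → X) (_ : ContinuousWrt ρ γ ∧ γ 0 = p ∧ γ 1 = q), pathLengthOf ρ γ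

/-- The induced length metric `d̄` of a metric space. -/
noncomputable def lengthMetric [PseudoEMetricSpace X] (p q : X) : ℝ≥0∞ :=
  lengthMetricOf (fun a b => edist a b) p q

/-!
Since `d ≤ d_ε ≤ d_0`, a `d_0`-Cauchy sequence is `d`-Cauchy and has a `d`-limit `l`. To bound
`d_δ(x_n, l)`, pass through a term `x_j` with `d(x_j, l) ≤ δ`: the pair `x_j, l` is itself a
`δ`-chain, so `d_δ(x_n, l) ≤ d_δ(x_n, x_j) + d_δ(x_j, l) ≤ d_0(x_n, x_j) + d(x_j, l)`, and both
terms are small for `n` and `j` large, uniformly in `δ`.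
-/

def chainAppend (y : ℕ → X) (n : ℕ) (z : ℕ → X) : ℕ → X :=
  fun k => if k < n then y k else z (k - n)

section ChainAppend

variable {y z : ℕ → X} {n : ℕ}

lemma chainAppend_of_le (hyz : y n = z 0) {k : ℕ} (hk : k ≤ n) : chainAppend y n z k = y k := by
  rcases hk.lt_or_eq with hk | rfl
  · simp [chainAppend, hk]
  · simp [chainAppend, hyz]

lemma chainAppend_add (k : ℕ) : chainAppend y n z (n + k) = z k := by
  simp [chainAppend]

lemma chainLengthOf_chainAppend (ρ : X → X → ℝ≥0∞) (hyz : y n = z 0) (m : ℕ) :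
    chainLengthOf ρ (chainAppend y n z) (n + m) = chainLengthOf ρ y n + chainLengthOf ρ z m := by
  unfold chainLengthOf
  rw [Finset.sum_range_add]
  congr 1
  · refine Finset.sum_congr rfl fun k hk => ?_
    rw [chainAppend_of_le hyz (Finset.mem_range.1 hk).le,
      chainAppend_of_le hyz (Finset.mem_range.1 hk)]
  · simp only [add_assoc, chainAppend_add]

lemma IsChainOf.append {ρ : X → X → ℝ≥0∞} {ε : ℝ≥0∞} {p q r : X} {m : ℕ}
    (hy : IsChainOf ρ ε p r y n) (hz : IsChainOf ρ ε r q z m) :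
    IsChainOf ρ ε p q (chainAppend y n z) (n + m) := by
  have hyz : y n = z 0 := hy.2.1.trans hz.1.symm
  refine ⟨(chainAppend_of_le hyz n.zero_le).trans hy.1, (chainAppend_add m).trans hz.2.1,
    fun k hk => ?_⟩
  rcases lt_or_ge k n with hkn | hkn
  · rw [chainAppend_of_le hyz hkn.le, chainAppend_of_le hyz hkn]
    exact hy.2.2 k hkn
  · obtain ⟨j, rfl⟩ := Nat.exists_eq_add_of_le hkn
    rw [chainAppend_add, add_assoc, chainAppend_add]
    exact hz.2.2 j (by omega)

end ChainAppend

section ChainDistOf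

variable {ρ : X → X → ℝ≥0∞} {ε : ℝ≥0∞}

lemma chainDistOf_le_chainLengthOf {p q : X} {x : ℕ → X} {n : ℕ} (hx : IsChainOf ρ ε p q x n) :
    chainDistOf ρ ε p q ≤ chainLengthOf ρ x n :=
  iInf₂_le_of_le n x (iInf_le _ hx)

lemma chainDistOf_triangle (p q r : X) :
    chainDistOf ρ ε p q ≤ chainDistOf ρ ε p r + chainDistOf ρ ε r q := by
  simp only [chainDistOf, ENNReal.iInf_add, ENNReal.add_iInf]
  refine le_iInf₂ fun m z => le_iInf fun hz => le_iInf₂ fun n y => le_iInf fun hy => ?_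
  rw [← chainLengthOf_chainAppend ρ (hy.2.1.trans hz.1.symm)]
  exact chainDistOf_le_chainLengthOf (hy.append hz)

end ChainDistOf

section PseudoEMetricSpace

variable [PseudoEMetricSpace X]

lemma edist_le_chainDist (ε : ℝ≥0∞) (p q : X) : edist p q ≤ chainDist ε p q := by
  refine le_iInf₂ fun n x => le_iInf fun hx => ?_
  calc edist p q = edist (x 0) (x n) := by rw [hx.1, hx.2.1]
    _ ≤ chainLengthOf (fun a b => edist a b) x n := edist_le_range_sum_edist x n

lemma chainDist_le_edist {ε : ℝ≥0∞} {p q : X} (h : edist p q ≤ ε) :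
    chainDist ε p q ≤ edist p q := by
  have hchain : IsChainOf (fun a b => edist a b) ε p q (fun k => if k = 0 then p else q) 1 :=
    ⟨rfl, rfl, fun k hk => by simpa [Nat.lt_one_iff.1 hk] using h⟩
  exact (chainDistOf_le_chainLengthOf hchain).trans (by simp [chainLengthOf])

lemma chainDist_le_chainMetric {ε : ℝ≥0∞} (hε : 0 < ε) (p q : X) :
    chainDist ε p q ≤ chainMetric p q :=
  le_iSup₂_of_le ε hε le_rfl

lemma edist_le_chainMetric (p q : X) : edist p q ≤ chainMetric p q :=
  (edist_le_chainDist 1 p q).trans (chainDist_le_chainMetric one_pos p q)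

lemma chainMetric_le_of_forall_edist_le {p q : X} {c : ℝ≥0∞}
    (h : ∀ δ > 0, ∃ r, edist r q ≤ δ ∧ chainMetric p r + edist r q ≤ c) :
    chainMetric p q ≤ c := by
  refine iSup₂_le fun δ hδ => ?_
  obtain ⟨r, hrq, hc⟩ := h δ hδ
  calc chainDist δ p q ≤ chainDist δ p r + chainDist δ r q := chainDistOf_triangle p q r
    _ ≤ chainMetric p r + edist r q :=
      add_le_add (chainDist_le_chainMetric hδ p r) (chainDist_le_edist hrq)
    _ ≤ c := hc

lemma cauchySeq_of_chainMetric {x : ℕ → X}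
    (hx : ∀ ε : ℝ≥0∞, 0 < ε → ∃ n₀ : ℕ, ∀ i ≥ n₀, ∀ j ≥ n₀, chainMetric (x i) (x j) ≤ ε) :
    CauchySeq x := by
  refine EMetric.cauchySeq_iff_NNReal.2 fun ε hε => ?_
  obtain ⟨N, hN⟩ := hx (ε / 2 : NNReal) (by simpa using hε.ne')
  refine ⟨N, fun n hn => ?_⟩
  calc edist (x n) (x N) ≤ (ε / 2 : NNReal) := (edist_le_chainMetric _ _).trans (hN n hn N le_rfl)
    _ < ε := ENNReal.coe_lt_coe.2 (half_lt_self hε)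

end PseudoEMetricSpace

/-- if `(X,d)` is complete, then `(X,d_0)` is complete: every `d_0`-Cauchy
sequence `d_0`-converges to a point of `X`. -/
theorem chainMetric_complete {X : Type*} [MetricSpace X] [CompleteSpace X] (x : ℕ → X)
    (hx : ∀ ε : ℝ≥0∞, 0 < ε → ∃ n₀ : ℕ, ∀ i ≥ n₀, ∀ j ≥ n₀, chainMetric (x i) (x j) ≤ ε) :
    ∃ l : X, Tendsto (fun n => chainMetric (x n) l) atTop (nhds 0) := by
  obtain ⟨l, hl⟩ := cauchySeq_tendsto_of_complete (cauchySeq_of_chainMetric hx)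
  refine ⟨l, ENNReal.tendsto_atTop_zero.2 fun ε hε => ?_⟩
  have hε2 : 0 < ε / 2 := ENNReal.half_pos hε.ne'
  obtain ⟨n₀, hn₀⟩ := hx (ε / 2) hε2
  refine ⟨n₀, fun n hn => chainMetric_le_of_forall_edist_le fun δ hδ => ?_⟩
  obtain ⟨N, hN⟩ := EMetric.tendsto_atTop.1 hl (min δ (ε / 2)) (lt_min hδ hε2)
  have hjl : edist (x (max N n₀)) l ≤ min δ (ε / 2) := (hN _ (le_max_left _ _)).le
  refine ⟨x (max N n₀), hjl.trans (min_le_left _ _), ?_⟩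
  calc chainMetric (x n) (x (max N n₀)) + edist (x (max N n₀)) l ≤ ε / 2 + ε / 2 :=
        add_le_add (hn₀ n hn _ (le_max_right _ _)) (hjl.trans (min_le_right _ _))
    _ = ε := ENNReal.add_halves ε
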